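/- In the 3D Lamé problem for a pressurized cylinder, the radial displacement w_r(ζ) = (pR²/4)(1 − 1/(2R))²[(1−2ν)(1+ζ) + (1 + 1/(2R))²/(1+ζ)] has thickness average over ζ ∈ (−1/(2R), 1/(2R)) equal to the refined-shell prediction pR²(1 − (1−σ)/(2R))/(2(1+σ)) up to an error of order 1/R², where σ = ν/(1−ν). -/

import Mathlib

/-!
Writing `1 / (1 + ζ) = 1 - ζ + ζ ^ 2 / (1 + ζ)`, the affine part of the integrand integrates
exactly over the symmetric interval `[-h, h]`, `h = 1 / (2R)`, and reproduces the refined-shell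
value up to `p (h ^ 2 - 1 - 2ν) / 16`. The remainder `∫ ζ ^ 2 / (1 + ζ)` is `O(h ^ 3)`, so even
after multiplication by the `R ^ 3` in front of it it stays bounded.
-/

open Set intervalIntegral

lemma intervalIntegrable_sq_div_one_add {h : ℝ} (h0 : 0 ≤ h) (h1 : h < 1) :
    IntervalIntegrable (fun ζ : ℝ => ζ ^ 2 / (1 + ζ)) MeasureTheory.volume (-h) h := by
  refine ContinuousOn.intervalIntegrable (continuousOn_id.pow 2 |>.div (by fun_prop) ?_)
  intro ζ hζ
  rw [uIcc_of_le (by linarith)] at hζ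
  linarith [hζ.1]

lemma integral_mul_one_add_add_div_one_add {h : ℝ} (a b : ℝ) (h0 : 0 ≤ h) (h1 : h < 1) :
    ∫ ζ in -h..h, (a * (1 + ζ) + b / (1 + ζ)) =
      2 * h * (a + b) + b * ∫ ζ in -h..h, ζ ^ 2 / (1 + ζ) := by
  have hsplit : ∀ ζ ∈ uIcc (-h) h,
      a * (1 + ζ) + b / (1 + ζ) = ((a + b) + (a - b) * ζ) + b * (ζ ^ 2 / (1 + ζ)) := by
    intro ζ hζ
    rw [uIcc_of_le (by linarith)] at hζ
    have : 1 + ζ ≠ 0 := by linarith [hζ.1]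
    field_simp
    ring
  rw [integral_congr hsplit,
    integral_add (Continuous.intervalIntegrable (by fun_prop) _ _)
      ((intervalIntegrable_sq_div_one_add h0 h1).const_mul b),
    integral_add intervalIntegrable_const (intervalIntegrable_id.const_mul _), integral_const,
    integral_const_mul, integral_const_mul, integral_id]
  simp only [sub_neg_eq_add, smul_eq_mul, neg_sq, sub_self]
  ring

lemma integral_sq_div_one_add_nonneg {h : ℝ} (h0 : 0 ≤ h) (h1 : h < 1) :
    0 ≤ ∫ ζ in -h..h, ζ ^ 2 / (1 + ζ) := by
  refine integral_nonneg (by linarith) fun ζ hζ => ?_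
  have : 0 < 1 + ζ := by linarith [hζ.1]
  positivity

lemma integral_sq_div_one_add_le {h : ℝ} (h0 : 0 ≤ h) (h1 : h < 1) :
    ∫ ζ in -h..h, ζ ^ 2 / (1 + ζ) ≤ 2 * h ^ 3 / (3 * (1 - h)) := by
  calc ∫ ζ in -h..h, ζ ^ 2 / (1 + ζ)
      ≤ ∫ ζ in -h..h, ζ ^ 2 / (1 - h) := by
        refine integral_mono_on (by linarith) (intervalIntegrable_sq_div_one_add h0 h1)
          (Continuous.intervalIntegrable (by fun_prop) _ _) fun ζ hζ => ?_
        gcongr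
        linarith [hζ.1]
    _ = 2 * h ^ 3 / (3 * (1 - h)) := by
        rw [integral_div, integral_pow]
        field_simp
        ring

noncomputable def lameDisplacement (ν p R ζ : ℝ) : ℝ :=
  (p * R ^ 2 / 4) * (1 - 1 / (2 * R)) ^ 2 *
    ((1 - 2 * ν) * (1 + ζ) + (1 + 1 / (2 * R)) ^ 2 / (1 + ζ))

noncomputable def lameAverage (ν p R : ℝ) : ℝ :=
  R * ∫ ζ in (-(1 / (2 * R)))..(1 / (2 * R)), lameDisplacement ν p R ζ

noncomputable def refinedShellDisplacement (ν p R : ℝ) : ℝ :=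
  let σ := ν / (1 - ν)
  p * R ^ 2 * (1 - (1 - σ) / (2 * R)) / (2 * (1 + σ))

lemma lameAverage_sub_refinedShellDisplacement {ν R : ℝ} (p : ℝ) (hν : ν ≠ 1) (hR : 1 < R) :
    lameAverage ν p R - refinedShellDisplacement ν p R =
      p / 16 * ((1 / (2 * R)) ^ 2 - 1 - 2 * ν) +
        p * R ^ 3 * (1 - (1 / (2 * R)) ^ 2) ^ 2 / 4 *
          ∫ ζ in -(1 / (2 * R))..(1 / (2 * R)), ζ ^ 2 / (1 + ζ) := by
  have hR0 : R ≠ 0 := by positivity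
  have hν' : 1 - ν ≠ 0 := sub_ne_zero.mpr hν.symm
  have h0 : 0 ≤ 1 / (2 * R) := by positivity
  have h1 : 1 / (2 * R) < 1 := by rw [div_lt_one (by positivity)]; linarith
  simp only [lameAverage, lameDisplacement, refinedShellDisplacement]
  rw [integral_const_mul, integral_mul_one_add_add_div_one_add _ _ h0 h1]
  field_simp
  ring

lemma abs_lameAverage_sub_refinedShellDisplacement_le {ν R : ℝ} (p : ℝ) (hν : ν ≠ 1)
    (hR : 1 < R) :
    |lameAverage ν p R - refinedShellDisplacement ν p R| ≤ |p| * (1 + |ν|) := by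
  rw [lameAverage_sub_refinedShellDisplacement p hν hR]
  set h := 1 / (2 * R) with h_def
  have hRh : R * h = 1 / 2 := by rw [h_def]; field_simp
  have h0 : 0 < h := by positivity
  have h1 : h < 1 / 2 := by rw [h_def, div_lt_div_iff₀ (by positivity) (by norm_num)]; linarith
  set E := ∫ ζ in -h..h, ζ ^ 2 / (1 + ζ)
  have hE0 : 0 ≤ E := integral_sq_div_one_add_nonneg h0.le (by linarith)
  have hRE : R ^ 3 * E ≤ 1 / 6 := by
    calc R ^ 3 * E ≤ R ^ 3 * (2 * h ^ 3 / (3 * (1 - h))) := by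
          gcongr; exact integral_sq_div_one_add_le h0.le (by linarith)
      _ = 1 / (12 * (1 - h)) := by
          rw [show R ^ 3 * (2 * h ^ 3 / (3 * (1 - h))) = 2 * (R * h) ^ 3 / (3 * (1 - h)) by ring,
            hRh]
          field_simp
          ring
      _ ≤ 1 / 6 := by gcongr; linarith
  have hbulk : |h ^ 2 - 1 - 2 * ν| ≤ 1 + 2 * |ν| := by
    have : |h ^ 2 - 1| ≤ 1 := abs_le.mpr ⟨by nlinarith, by nlinarith⟩
    calc |h ^ 2 - 1 - 2 * ν| ≤ |h ^ 2 - 1| + |2 * ν| := abs_sub _ _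
      _ ≤ 1 + 2 * |ν| := by rw [abs_mul, abs_two]; linarith
  have hshell : (1 - h ^ 2) ^ 2 ≤ 1 := pow_le_one₀ (by nlinarith) (by nlinarith)
  have hA : |p / 16 * (h ^ 2 - 1 - 2 * ν)| ≤ |p| / 16 * (1 + 2 * |ν|) := by
    rw [abs_mul, abs_div, abs_of_pos (by norm_num : (0 : ℝ) < 16)]
    gcongr
  have hB : |p * R ^ 3 * (1 - h ^ 2) ^ 2 / 4 * E| ≤ |p| * (1 * (1 / 6) / 4) := by
    rw [show p * R ^ 3 * (1 - h ^ 2) ^ 2 / 4 * E = p * ((1 - h ^ 2) ^ 2 * (R ^ 3 * E) / 4) by ring,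
      abs_mul, abs_of_nonneg (div_nonneg (mul_nonneg (sq_nonneg _)
        (mul_nonneg (by positivity) hE0)) four_pos.le)]
    gcongr
  calc _ ≤ _ := abs_add_le _ _
    _ ≤ |p| * (1 + |ν|) := by nlinarith [abs_nonneg p, mul_nonneg (abs_nonneg p) (abs_nonneg ν)]

theorem lame_average_matches_refined_shell_general
    (ν p : ℝ) (hν : ν < 1 / 2) :
    let σ := ν / (1 - ν)
    let w : ℝ → ℝ → ℝ := fun R ζ =>
      (p * R ^ 2 / 4) * (1 - 1 / (2 * R)) ^ 2 *
        ((1 - 2 * ν) * (1 + ζ) + (1 + 1 / (2 * R)) ^ 2 / (1 + ζ))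
    let W : ℝ → ℝ := fun R => R * ∫ ζ in (-(1 / (2 * R)))..(1 / (2 * R)), w R ζ
    let U : ℝ → ℝ := fun R => p * R ^ 2 * (1 - (1 - σ) / (2 * R)) / (2 * (1 + σ))
    ∃ C : ℝ, ∀ R : ℝ, 2 ≤ R → |W R - U R| ≤ C :=
  ⟨|p| * (1 + |ν|), fun _ hR =>
    abs_lameAverage_sub_refinedShellDisplacement_le p (by linarith) (by linarith)⟩

/-- The thickness average of the 3D Lamé radial displacement for a pressurized
cylinder agrees with the refined-shell prediction up to a bounded (O(1))
error as `R → ∞` (hence relative error `O(1/R²)`). -/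
theorem lame_average_matches_refined_shell
    (ν p : ℝ) (hν0 : 0 ≤ ν) (hν : ν < 1 / 2) :
    let σ := ν / (1 - ν)
    let w : ℝ → ℝ → ℝ := fun R ζ =>
      (p * R ^ 2 / 4) * (1 - 1 / (2 * R)) ^ 2 *
        ((1 - 2 * ν) * (1 + ζ) + (1 + 1 / (2 * R)) ^ 2 / (1 + ζ))
    let W : ℝ → ℝ := fun R => R * ∫ ζ in (-(1 / (2 * R)))..(1 / (2 * R)), w R ζ
    let U : ℝ → ℝ := fun R => p * R ^ 2 * (1 - (1 - σ) / (2 * R)) / (2 * (1 + σ))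
    ∃ C : ℝ, ∀ R : ℝ, 2 ≤ R → |W R - U R| ≤ C :=
  lame_average_matches_refined_shell_general ν p hν
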